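/- Let C be a category with a zero object and all finite limits, and suppose given a commutative square consisting of objects A, B, C, D and morphisms α' : A → C, α : B → D, β' : A → B, β : C → D satisfying β' ≫ α = α' ≫ β. Then the fiber (kernel) of the induced morphism Fib(α') → Fib(α) (the morphism between kernels induced by β' and β) is isomorphic to the fiber of the canonical morphism A → B ×_D C, where B ×_D C is the pullback of α : B → D and β : C → D and the morphism A → B ×_D C is the one induced by β' and α'. -/

import Mathlib

/-! A map `u : T ⟶ Fib(α')` is killed by `Fib(α') ⟶ Fib(α)` iff `u ≫ ι ≫ β'` vanishes, and a map
`u : T ⟶ A` is killed by `A ⟶ B ×_D X` iff both `u ≫ β'` and `u ≫ α'` vanish. Hence the composite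
`Fib(Fib(α') ⟶ Fib(α)) ⟶ Fib(α') ⟶ A` of the two (monic) kernel inclusions is itself a kernel of
`A ⟶ B ×_D X`, and kernels are unique up to isomorphism. -/

open CategoryTheory CategoryTheory.Limits

namespace CategoryTheory.Limits

variable {C : Type*} [Category C] [HasZeroMorphisms C]

lemma comp_pullback_lift_eq_zero_iff {T A B X D : C} {α : B ⟶ D} {β : X ⟶ D} [HasPullback α β]
    (f : A ⟶ B) (g : A ⟶ X) (w : f ≫ α = g ≫ β) (u : T ⟶ A) :
    u ≫ pullback.lift f g w = 0 ↔ u ≫ f = 0 ∧ u ≫ g = 0 := by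
  constructor
  · intro h
    constructor
    · rw [← pullback.lift_fst f g w, ← Category.assoc, h, zero_comp]
    · rw [← pullback.lift_snd f g w, ← Category.assoc, h, zero_comp]
  · rintro ⟨hf, hg⟩
    ext
    · rw [Category.assoc, pullback.lift_fst, hf, zero_comp]
    · rw [Category.assoc, pullback.lift_snd, hg, zero_comp]

lemma comp_kernel_map_eq_zero_iff {T X Y X' Y' : C} {f : X ⟶ Y} {f' : X' ⟶ Y'}
    [HasKernel f] [HasKernel f'] (p : X ⟶ X') (q : Y ⟶ Y') (w : f ≫ q = p ≫ f')
    (u : T ⟶ kernel f) :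
    u ≫ kernel.map f f' p q w = 0 ↔ u ≫ kernel.ι f ≫ p = 0 := by
  rw [← cancel_mono (kernel.ι f'), Category.assoc, kernel.lift_ι, zero_comp]

variable [HasFiniteLimits C] {A B X D : C} (α' : A ⟶ X) (α : B ⟶ D) (β' : A ⟶ B) (β : X ⟶ D)
  (w : β' ≫ α = α' ≫ β)

lemma kernel_ι_kernel_map_comp_pullback_lift :
    (kernel.ι (kernel.map α' α β' β w.symm) ≫ kernel.ι α') ≫ pullback.lift β' α' w = 0 := by
  rw [comp_pullback_lift_eq_zero_iff, Category.assoc, Category.assoc, kernel.condition, comp_zero,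
    and_iff_left rfl, ← comp_kernel_map_eq_zero_iff β' β w.symm, kernel.condition]

noncomputable def kernelKernelMapIsKernelPullbackLift :
    IsLimit (KernelFork.ofι _ (kernel_ι_kernel_map_comp_pullback_lift α' α β' β w)) :=
  KernelFork.IsLimit.ofι' _ _ fun u hu => by
    rw [comp_pullback_lift_eq_zero_iff] at hu
    refine ⟨kernel.lift _ (kernel.lift α' u hu.2) ?_, by rw [kernel.lift_ι_assoc, kernel.lift_ι]⟩
    rw [comp_kernel_map_eq_zero_iff, kernel.lift_ι_assoc, hu.1]

end CategoryTheory.Limits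

theorem fib_of_kernel_map_iso_fib_of_lift_to_pullback_general
    {C : Type*} [Category C] [HasZeroMorphisms C] [HasFiniteLimits C]
    {A B X D : C} (α' : A ⟶ X) (α : B ⟶ D) (β' : A ⟶ B) (β : X ⟶ D)
    (w : β' ≫ α = α' ≫ β) :
    Nonempty (kernel (kernel.map α' α β' β w.symm) ≅ kernel (pullback.lift β' α' w)) :=
  ⟨(kernelKernelMapIsKernelPullbackLift α' α β' β w).conePointUniqueUpToIso (limit.isLimit _)⟩

/-- In a category with a zero object and all finite limits, given a
commutative square `β' ≫ α = α' ≫ β`, the fiber (kernel) of the induced morphism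
`Fib(α') → Fib(α)` (induced by `β'` and `β`) is isomorphic to the fiber of the canonical
morphism `A → B ×_D C` induced by `β'` and `α'`. -/
theorem fib_of_kernel_map_iso_fib_of_lift_to_pullback
    {C : Type*} [Category C] [HasZeroObject C] [HasZeroMorphisms C] [HasFiniteLimits C]
    {A B X D : C} (α' : A ⟶ X) (α : B ⟶ D) (β' : A ⟶ B) (β : X ⟶ D)
    (w : β' ≫ α = α' ≫ β) :
    Nonempty (kernel (kernel.map α' α β' β w.symm) ≅ kernel (pullback.lift β' α' w)) :=
  fib_of_kernel_map_iso_fib_of_lift_to_pullback_general α' α β' β w
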